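/- If (A, tr₁) and (A, tr₂) are two symmetric Frobenius structures on the same algebra A, with e ∈ Z(A) invertible satisfying tr₁(a) = tr₂(ea) for all a, then the dual bases satisfy b^{∨,2} = e·b^{∨,1}, the diamond products satisfy a ⋄₂ b = e·(a ⋄₁ b), and κ₂ = e²·κ₁. Consequently the map a ↦ e^{-1}a induces an isomorphism of (not necessarily unital) algebras (C(A), ⋄₁) → (C(A), ⋄₂). -/

import Mathlib

/-!
Since `tr₂ (e d₁ᵢ bⱼ) = tr₁ (d₁ᵢ bⱼ) = δᵢⱼ`, nondegeneracy of `tr₂` forces `d₂ = e d₁`.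
Everything else follows because `e` and `e⁻¹` are central: they pull out of `⋄` and `κ`, and left
multiplication by them preserves the span of commutators.
-/

open Finset

section Diamond

variable {A ι : Type*} [Semiring A] [Fintype ι]

/-- `a ⋄ b = ∑_c a c b c^∨`, for a basis `B` with dual family `d`. -/
def diamond (B d : ι → A) (a b : A) : A := ∑ i, a * B i * b * d i

/-- `κ = ∑_a a ⋄ a^∨`. -/
def kappa (B d : ι → A) : A := ∑ i, diamond B d (B i) (d i)

variable (B d : ι → A) {c : A}

theorem diamond_mul_left (a b : A) : diamond B d (c * a) b = c * diamond B d a b := by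
  simp only [diamond, mul_sum, mul_assoc]

theorem diamond_mul_right_of_commute (hc : ∀ x, Commute c x) (a b : A) :
    diamond B d a (c * b) = c * diamond B d a b := by
  rw [diamond, diamond, mul_sum]
  refine sum_congr rfl fun i _ => ?_
  rw [← mul_assoc (a * B i), ← (hc (a * B i)).eq]
  simp only [mul_assoc]

theorem diamond_mul_dual_of_commute (hc : ∀ x, Commute c x) (a b : A) :
    diamond B (fun i => c * d i) a b = c * diamond B d a b := by
  rw [diamond, diamond, mul_sum]
  refine sum_congr rfl fun i _ => ?_
  rw [← mul_assoc, ← (hc (a * B i * b)).eq, mul_assoc c]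

theorem kappa_mul_dual_of_commute (hc : ∀ x, Commute c x) :
    kappa B (fun i => c * d i) = c * c * kappa B d := by
  simp only [kappa, diamond_mul_dual_of_commute B d hc, diamond_mul_right_of_commute B d hc,
    mul_sum, mul_assoc]

end Diamond

theorem eq_of_forall_trace_mul_basis_eq {R A ι : Type*} [CommRing R] [Ring A] [Algebra R A]
    (B : Module.Basis ι R A) (tr : A →ₗ[R] R)
    (hnd : ∀ a : A, (∀ b : A, tr (a * b) = 0) → a = 0)
    {x y : A} (h : ∀ j, tr (x * B j) = tr (y * B j)) : x = y := by
  have hzero : tr ∘ₗ LinearMap.mulLeft R (x - y) = 0 :=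
    B.ext fun j => by
      rw [LinearMap.comp_apply, LinearMap.mulLeft_apply, sub_mul, map_sub, h j, sub_self,
        LinearMap.zero_apply]
  exact sub_eq_zero.mp (hnd _ fun b => LinearMap.congr_fun hzero b)

section CommutatorSpan

variable (k A : Type*) [CommRing k] [Ring A] [Algebra k A]

/-- `A ⧸ commutatorSpan k A` is the space `C(A)`. -/
def commutatorSpan : Submodule k A := Submodule.span k {x : A | ∃ y z : A, x = y * z - z * y}

variable {k A}

theorem commutatorSpan_le_comap_mulLeft {c : A} (hc : ∀ x, Commute c x) :
    commutatorSpan k A ≤ (commutatorSpan k A).comap (LinearMap.mulLeft k c) :=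
  Submodule.span_le.mpr <| by
    rintro _ ⟨y, z, rfl⟩
    refine Submodule.subset_span ⟨c * y, z, ?_⟩
    rw [LinearMap.mulLeft_apply, mul_sub, ← mul_assoc, ← mul_assoc, (hc z).eq, mul_assoc z]

theorem map_mulLeftLinearEquiv_commutatorSpan (u : Aˣ) (hu : ∀ x, Commute (u : A) x) :
    (commutatorSpan k A).map (u.mulLeftLinearEquiv k A : A →ₗ[k] A) = commutatorSpan k A := by
  refine le_antisymm (Submodule.map_le_iff_le_comap.mpr (commutatorSpan_le_comap_mulLeft hu))
    fun x hx => ⟨(u⁻¹ : Aˣ) * x, ?_, by simp⟩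
  exact commutatorSpan_le_comap_mulLeft (fun y => (hu y).units_inv_left) hx

end CommutatorSpan

theorem stmt10_general {k A : Type*} [Field k] [Ring A] [Algebra k A]
    {ι : Type*} [Fintype ι] [DecidableEq ι]
    (B : Module.Basis ι k A)
    (tr₁ tr₂ : A →ₗ[k] k)
    (hnd₂ : ∀ a : A, (∀ b : A, tr₂ (a * b) = 0) → a = 0)
    (e f : A) (hcentral : ∀ x : A, e * x = x * e)
    (hef : e * f = 1) (hfe : f * e = 1)
    (htr : ∀ a : A, tr₁ a = tr₂ (e * a))
    (d₁ d₂ : ι → A)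
    (hd₁ : ∀ i j, tr₁ (d₁ i * B j) = if i = j then 1 else 0)
    (hd₂ : ∀ i j, tr₂ (d₂ i * B j) = if i = j then 1 else 0)
    (diam₁ diam₂ : A → A → A)
    (hdiam₁ : ∀ a b, diam₁ a b = ∑ i, a * B i * b * d₁ i)
    (hdiam₂ : ∀ a b, diam₂ a b = ∑ i, a * B i * b * d₂ i)
    (J : Submodule k A)
    (hJ : J = Submodule.span k {x : A | ∃ y z : A, x = y * z - z * y}) :
    (∀ i, d₂ i = e * d₁ i) ∧
    (∀ a b : A, diam₂ a b = e * diam₁ a b) ∧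
    ((∑ i, ∑ j, B i * B j * d₂ i * d₂ j) = e * e * ∑ i, ∑ j, B i * B j * d₁ i * d₁ j) ∧
    (∀ a b : A, (Submodule.Quotient.mk (f * diam₁ a b) : A ⧸ J)
        = Submodule.Quotient.mk (diam₂ (f * a) (f * b))) ∧
    (∃ ψ : (A ⧸ J) ≃ₗ[k] (A ⧸ J),
      ∀ a : A, ψ (Submodule.Quotient.mk a) = Submodule.Quotient.mk (f * a)) := by
  have hd : d₂ = fun i => e * d₁ i := funext fun i =>
    eq_of_forall_trace_mul_basis_eq B tr₂ hnd₂ fun j => by rw [hd₂, mul_assoc, ← htr, hd₁]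
  obtain rfl : diam₁ = diamond B d₁ := funext₂ hdiam₁
  obtain rfl : diam₂ = diamond B d₂ := funext₂ hdiam₂
  subst hd hJ
  let u : Aˣ := ⟨e, f, hef, hfe⟩
  have hf : ∀ x, Commute f x := fun x => Commute.units_inv_left (u := u) (hcentral x)
  refine ⟨fun i => rfl, diamond_mul_dual_of_commute B d₁ hcentral,
    kappa_mul_dual_of_commute B d₁ hcentral, fun a b => ?_,
    ⟨Submodule.Quotient.equiv _ _ _ (map_mulLeftLinearEquiv_commutatorSpan u⁻¹ hf),
      fun a => rfl⟩⟩
  rw [diamond_mul_dual_of_commute B d₁ hcentral, diamond_mul_left,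
    diamond_mul_right_of_commute B d₁ hf, ← mul_assoc, hef, one_mul]

/-- Change of trace map: if `tr₁(a) = tr₂(e a)` for an invertible central `e`, then
`b^{∨,2} = e b^{∨,1}`, `a ⋄₂ b = e (a ⋄₁ b)`, `κ₂ = e² κ₁`, and `a ↦ e⁻¹ a` induces an
isomorphism of (not necessarily unital) algebras `(C(A), ⋄₁) → (C(A), ⋄₂)`. -/
theorem stmt10 {k A : Type*} [Field k] [Ring A] [Algebra k A]
    {ι : Type*} [Fintype ι] [DecidableEq ι]
    (B : Module.Basis ι k A)
    (tr₁ tr₂ : A →ₗ[k] k)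
    (hsym₁ : ∀ a b : A, tr₁ (a * b) = tr₁ (b * a))
    (hsym₂ : ∀ a b : A, tr₂ (a * b) = tr₂ (b * a))
    (hnd₁ : ∀ a : A, (∀ b : A, tr₁ (a * b) = 0) → a = 0)
    (hnd₂ : ∀ a : A, (∀ b : A, tr₂ (a * b) = 0) → a = 0)
    (e f : A) (hcentral : ∀ x : A, e * x = x * e)
    (hef : e * f = 1) (hfe : f * e = 1)
    (htr : ∀ a : A, tr₁ a = tr₂ (e * a))
    (d₁ d₂ : ι → A)
    (hd₁ : ∀ i j, tr₁ (d₁ i * B j) = if i = j then 1 else 0)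
    (hd₂ : ∀ i j, tr₂ (d₂ i * B j) = if i = j then 1 else 0)
    (diam₁ diam₂ : A → A → A)
    (hdiam₁ : ∀ a b, diam₁ a b = ∑ i, a * B i * b * d₁ i)
    (hdiam₂ : ∀ a b, diam₂ a b = ∑ i, a * B i * b * d₂ i)
    (J : Submodule k A)
    (hJ : J = Submodule.span k {x : A | ∃ y z : A, x = y * z - z * y}) :
    (∀ i, d₂ i = e * d₁ i) ∧
    (∀ a b : A, diam₂ a b = e * diam₁ a b) ∧
    ((∑ i, ∑ j, B i * B j * d₂ i * d₂ j) = e * e * ∑ i, ∑ j, B i * B j * d₁ i * d₁ j) ∧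
    (∀ a b : A, (Submodule.Quotient.mk (f * diam₁ a b) : A ⧸ J)
        = Submodule.Quotient.mk (diam₂ (f * a) (f * b))) ∧
    (∃ ψ : (A ⧸ J) ≃ₗ[k] (A ⧸ J),
      ∀ a : A, ψ (Submodule.Quotient.mk a) = Submodule.Quotient.mk (f * a)) :=
  stmt10_general B tr₁ tr₂ hnd₂ e f hcentral hef hfe htr d₁ d₂ hd₁ hd₂ diam₁ diam₂ hdiam₁ hdiam₂ J
    hJ
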